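/- Let G1=(V1,E1,ℓ1), G2=(V2,E2,ℓ2), G3=(V3,E3,ℓ3) be finite acyclic labeled graphs with single-character vertex labels, and let v1∈V1, v2∈V2, v3∈V3 with ℓ1(v1)=ℓ2(v2)=ℓ3(v3). If v1, v2 and v3 each have at least one in-coming edge, then D(v1,v2,v3) = 1 + max{ D(u1,u2,u3) : (u1,v1)∈E1, (u2,v2)∈E2, (u3,v3)∈E3 } (with the conventions −∞+1=−∞ and max over values that may include −∞). -/

import Mathlib

open List Relation

section Defs

variable {V V1 V2 V3 α : Type*}

/-- A (directed) path: a nonempty list of vertices, consecutive ones joined by edges. -/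
def IsPath (E : V → V → Prop) (p : List V) : Prop :=
  p ≠ [] ∧ p.Chain' E

/-- Paths ending at `v` (the set `P(v)`). -/
def EndsAt (E : V → V → Prop) (v : V) (p : List V) : Prop :=
  IsPath E p ∧ p.getLast? = some v

/-- A path is left-maximal if its first vertex has no in-coming edges. -/
def LeftMax (E : V → V → Prop) (p : List V) : Prop :=
  ∀ w u, p.head? = some w → ¬ E u w

/-- A path is right-maximal if its last vertex has no out-going edges. -/
def RightMax (E : V → V → Prop) (p : List V) : Prop :=
  ∀ w u, p.getLast? = some w → ¬ E w u

/-- `Subseq(ℓ(P(v)))`: subsequences of label strings of paths ending at `v`. -/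
def SubseqAt (E : V → V → Prop) (ℓ : V → α) (v : V) : Set (List α) :=
  {z | ∃ p, EndsAt E v p ∧ z.Sublist (p.map ℓ)}

/-- `Subseq(ℓ(LMP(v)))`: subsequences of label strings of left-maximal paths ending at `v`. -/
def SubseqLM (E : V → V → Prop) (ℓ : V → α) (v : V) : Set (List α) :=
  {z | ∃ p, EndsAt E v p ∧ LeftMax E p ∧ z.Sublist (p.map ℓ)}

/-- `Subseq(G)`: subsequences of label strings of all paths of `G`. -/
def SubseqG (E : V → V → Prop) (ℓ : V → α) : Set (List α) :=
  {z | ∃ p, IsPath E p ∧ z.Sublist (p.map ℓ)}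

/-- A graph is acyclic if no vertex lies on a nonempty cycle. -/
def Acyclic (E : V → V → Prop) : Prop :=
  ∀ v, ¬ Relation.TransGen E v v

/-- The set `S_IC(v1,v2,v3)`. -/
def SIC (E1 : V1 → V1 → Prop) (ℓ1 : V1 → α) (E2 : V2 → V2 → Prop) (ℓ2 : V2 → α)
    (E3 : V3 → V3 → Prop) (ℓ3 : V3 → α) (v1 : V1) (v2 : V2) (v3 : V3) :
    Set (List α) :=
  {z | (∃ q, EndsAt E3 v3 q ∧ LeftMax E3 q ∧ (q.map ℓ3).Sublist z) ∧
       z ∈ SubseqAt E1 ℓ1 v1 ∧ z ∈ SubseqAt E2 ℓ2 v2}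

/-- Maximum length of a string in `S`, with `⊥` (= −∞) for `S = ∅`. -/
noncomputable def maxLen (S : Set (List α)) : WithBot ℕ :=
  sSup ((fun z : List α => (z.length : WithBot ℕ)) '' S)

/-- `L(v1,v2)`: the maximum length of a common subsequence (as a natural number). -/
noncomputable def Lval (E1 : V1 → V1 → Prop) (ℓ1 : V1 → α)
    (E2 : V2 → V2 → Prop) (ℓ2 : V2 → α) (v1 : V1) (v2 : V2) : ℕ :=
  sSup {n | ∃ z ∈ SubseqAt E1 ℓ1 v1 ∩ SubseqAt E2 ℓ2 v2, n = z.length}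

/-- `D(v1,v2,v3)`: the maximum length of a string in `S_IC(v1,v2,v3)`, `−∞` if empty. -/
noncomputable def Dval (E1 : V1 → V1 → Prop) (ℓ1 : V1 → α) (E2 : V2 → V2 → Prop) (ℓ2 : V2 → α)
    (E3 : V3 → V3 → Prop) (ℓ3 : V3 → α) (v1 : V1) (v2 : V2) (v3 : V3) : WithBot ℕ :=
  maxLen (SIC E1 ℓ1 E2 ℓ2 E3 ℓ3 v1 v2 v3)

end Defs

/-! Removing the last letter of a word of `S_IC(v1,v2,v3)` gives a word of `S_IC(u1,u2,u3)` for
in-neighbours `ui` of `vi`: the witnessing paths lose their last vertex, and the left-maximal path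
ending at `v3` has at least two vertices because `v3` has an in-coming edge. Conversely, appending
the common label of the `vi` to a word of `S_IC(u1,u2,u3)` gives a word of `S_IC(v1,v2,v3)`.
As `G1` is finite and acyclic, all lengths are at most `|V1|`, so every supremum involved is a
maximum or `−∞`. -/

theorem List.Sublist.dropLast {α : Type*} {s t : List α} (h : s <+ t) :
    s.dropLast <+ t.dropLast := by
  simpa using h.reverse.tail.reverse

theorem List.IsChain.nodup_of_acyclic {V : Type*} {E : V → V → Prop} (hE : Acyclic E)
    {p : List V} (hp : p.IsChain E) : p.Nodup :=
  (isChain_iff_pairwise.mp (hp.imp fun _ _ => TransGen.single)).imp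
    fun h => by rintro rfl; exact hE _ h

theorem BddAbove.csSup_eq_bot_or_mem {β : Type*} [ConditionallyCompleteLinearOrderBot β]
    [LocallyFiniteOrderBot β] {s : Set β} (hs : BddAbove s) : sSup s = ⊥ ∨ sSup s ∈ s := by
  rcases s.eq_empty_or_nonempty with rfl | hne
  · exact Or.inl csSup_empty
  · exact Or.inr (hne.csSup_mem hs.finite)

section MaxLen

variable {α : Type*} {S : Set (List α)}

theorem maxLen_le {d : WithBot ℕ} (h : ∀ z ∈ S, (z.length : WithBot ℕ) ≤ d) : maxLen S ≤ d :=
  csSup_le' <| Set.forall_mem_image.mpr h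

theorem bddAbove_image_length {n : ℕ} (hS : ∀ z ∈ S, z.length ≤ n) :
    BddAbove ((fun z : List α => (z.length : WithBot ℕ)) '' S) :=
  ⟨n, Set.forall_mem_image.mpr fun z hz => WithBot.coe_le_coe.mpr (hS z hz)⟩

theorem le_maxLen {n : ℕ} (hS : ∀ z ∈ S, z.length ≤ n) {z : List α} (hz : z ∈ S) :
    (z.length : WithBot ℕ) ≤ maxLen S :=
  le_csSup (bddAbove_image_length hS) (Set.mem_image_of_mem _ hz)

theorem maxLen_eq_bot_or_exists {n : ℕ} (hS : ∀ z ∈ S, z.length ≤ n) :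
    maxLen S = ⊥ ∨ ∃ z ∈ S, maxLen S = z.length :=
  (bddAbove_image_length hS).csSup_eq_bot_or_mem.imp_right fun ⟨z, hz, h⟩ => ⟨z, hz, h.symm⟩

end MaxLen

section Paths

variable {V α : Type*} {E : V → V → Prop} {ℓ : V → α} {p : List V} {u v : V}

theorem EndsAt.concat (hp : EndsAt E u p) (e : E u v) : EndsAt E v (p ++ [v]) := by
  obtain ⟨⟨-, hch⟩, hlast⟩ := hp
  refine ⟨⟨by simp, isChain_append.mpr ⟨hch, isChain_singleton v, ?_⟩⟩, by simp⟩
  simp_all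

theorem EndsAt.exists_dropLast (hp : EndsAt E v p) (hlen : 2 ≤ p.length) :
    ∃ u, E u v ∧ EndsAt E u p.dropLast := by
  obtain ⟨⟨-, hch⟩, hlast⟩ := hp
  have hne : p.dropLast ≠ [] := by rw [← length_pos_iff, length_dropLast]; omega
  have hsplit : p.dropLast ++ [v] = p := dropLast_append_getLast? v hlast
  have hch : (p.dropLast ++ [v]).IsChain E := by rw [hsplit]; exact hch
  rw [isChain_append] at hch
  refine ⟨p.dropLast.getLast hne, ?_, ⟨hne, hch.1⟩, getLast?_eq_some_getLast hne⟩
  exact hch.2.2 _ (getLast?_eq_some_getLast hne) v rfl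

theorem LeftMax.concat (hp : LeftMax E p) (hne : p ≠ []) (v : V) : LeftMax E (p ++ [v]) := by
  intro w u hw
  exact hp w u (by rwa [head?_append_of_ne_nil _ hne] at hw)

theorem LeftMax.dropLast (hp : LeftMax E p) (hne : p.dropLast ≠ []) : LeftMax E p.dropLast := by
  intro w u hw
  refine hp w u ?_
  rw [← dropLast_append_getLast (l := p) (fun h => hne (by simp [h])),
    head?_append_of_ne_nil _ hne]
  exact hw

theorem EndsAt.two_le_length_of_leftMax (hp : EndsAt E v p) (hlm : LeftMax E p)
    (hv : ∃ u, E u v) : 2 ≤ p.length := by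
  obtain ⟨⟨hne, -⟩, hlast⟩ := hp
  obtain ⟨u, e⟩ := hv
  match p, hne with
  | [w], _ => exact absurd e (hlm v u (by simpa using hlast))
  | _ :: _ :: _, _ => simp

theorem concat_mem_subseqAt {z : List α} (hz : z ∈ SubseqAt E ℓ u) (e : E u v) :
    z ++ [ℓ v] ∈ SubseqAt E ℓ v := by
  obtain ⟨p, hp, hsub⟩ := hz
  exact ⟨p ++ [v], hp.concat e, by simpa using hsub.append (Sublist.refl [ℓ v])⟩

theorem exists_dropLast_mem_subseqAt {z : List α} (hz : z ∈ SubseqAt E ℓ v)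
    (hlen : 2 ≤ z.length) : ∃ u, E u v ∧ z.dropLast ∈ SubseqAt E ℓ u := by
  obtain ⟨p, hp, hsub⟩ := hz
  have hplen : 2 ≤ p.length := by simpa using hlen.trans hsub.length_le
  obtain ⟨u, e, hu⟩ := hp.exists_dropLast hplen
  exact ⟨u, e, p.dropLast, hu, by simpa [map_dropLast] using hsub.dropLast⟩

theorem length_le_card_of_mem_subseqAt [Fintype V] (hE : Acyclic E) {z : List α}
    (hz : z ∈ SubseqAt E ℓ v) : z.length ≤ Fintype.card V := by
  obtain ⟨p, ⟨⟨-, hch⟩, -⟩, hsub⟩ := hz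
  exact (hsub.length_le.trans_eq (length_map _)).trans (hch.nodup_of_acyclic hE).length_le_card

end Paths

section SIC

variable {V1 V2 V3 α : Type*} {E1 : V1 → V1 → Prop} {ℓ1 : V1 → α} {E2 : V2 → V2 → Prop}
  {ℓ2 : V2 → α} {E3 : V3 → V3 → Prop} {ℓ3 : V3 → α} {v1 : V1} {v2 : V2} {v3 : V3} {z : List α}

theorem length_le_card_of_mem_SIC [Fintype V1] (hE1 : Acyclic E1)
    (hz : z ∈ SIC E1 ℓ1 E2 ℓ2 E3 ℓ3 v1 v2 v3) : z.length ≤ Fintype.card V1 :=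
  length_le_card_of_mem_subseqAt hE1 hz.2.1

theorem le_Dval [Fintype V1] (hE1 : Acyclic E1) (hz : z ∈ SIC E1 ℓ1 E2 ℓ2 E3 ℓ3 v1 v2 v3) :
    (z.length : WithBot ℕ) ≤ Dval E1 ℓ1 E2 ℓ2 E3 ℓ3 v1 v2 v3 :=
  le_maxLen (fun _ => length_le_card_of_mem_SIC hE1) hz

theorem Dval_le_card [Fintype V1] (hE1 : Acyclic E1) :
    Dval E1 ℓ1 E2 ℓ2 E3 ℓ3 v1 v2 v3 ≤ Fintype.card V1 :=
  maxLen_le fun _ hz => WithBot.coe_le_coe.mpr (length_le_card_of_mem_SIC hE1 hz)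

theorem Dval_eq_bot_or_exists [Fintype V1] (hE1 : Acyclic E1) :
    Dval E1 ℓ1 E2 ℓ2 E3 ℓ3 v1 v2 v3 = ⊥ ∨
      ∃ z ∈ SIC E1 ℓ1 E2 ℓ2 E3 ℓ3 v1 v2 v3, Dval E1 ℓ1 E2 ℓ2 E3 ℓ3 v1 v2 v3 = z.length :=
  maxLen_eq_bot_or_exists fun _ => length_le_card_of_mem_SIC hE1

theorem concat_mem_SIC {u1 : V1} {u2 : V2} {u3 : V3}
    (e1 : E1 u1 v1) (e2 : E2 u2 v2) (e3 : E3 u3 v3) (hl12 : ℓ1 v1 = ℓ2 v2) (hl23 : ℓ2 v2 = ℓ3 v3)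
    (hz : z ∈ SIC E1 ℓ1 E2 ℓ2 E3 ℓ3 u1 u2 u3) : z ++ [ℓ1 v1] ∈ SIC E1 ℓ1 E2 ℓ2 E3 ℓ3 v1 v2 v3 := by
  obtain ⟨⟨q, hq, hlm, hqz⟩, hz1, hz2⟩ := hz
  refine ⟨⟨q ++ [v3], hq.concat e3, hlm.concat hq.1.1 v3, ?_⟩, concat_mem_subseqAt hz1 e1, ?_⟩
  · simpa [hl12, hl23] using hqz.append (Sublist.refl [ℓ3 v3])
  · simpa [hl12] using concat_mem_subseqAt hz2 e2

theorem exists_dropLast_mem_SIC (hv3 : ∃ u, E3 u v3) (hz : z ∈ SIC E1 ℓ1 E2 ℓ2 E3 ℓ3 v1 v2 v3) :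
    ∃ u1 u2 u3, E1 u1 v1 ∧ E2 u2 v2 ∧ E3 u3 v3 ∧
      z.dropLast ∈ SIC E1 ℓ1 E2 ℓ2 E3 ℓ3 u1 u2 u3 ∧ z.length = z.dropLast.length + 1 := by
  obtain ⟨⟨q, hq, hlm, hqz⟩, hz1, hz2⟩ := hz
  have hqlen : 2 ≤ q.length := hq.two_le_length_of_leftMax hlm hv3
  have hzlen : 2 ≤ z.length := hqlen.trans (by simpa using hqz.length_le)
  obtain ⟨u1, e1, hu1⟩ := exists_dropLast_mem_subseqAt hz1 hzlen
  obtain ⟨u2, e2, hu2⟩ := exists_dropLast_mem_subseqAt hz2 hzlen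
  obtain ⟨u3, e3, hu3⟩ := hq.exists_dropLast hqlen
  refine ⟨u1, u2, u3, e1, e2, e3, ⟨⟨q.dropLast, hu3, hlm.dropLast hu3.1.1, ?_⟩, hu1, hu2⟩, ?_⟩
  · simpa [map_dropLast] using hqz.dropLast
  · rw [length_dropLast]; omega

theorem one_add_Dval_le [Fintype V1] (hE1 : Acyclic E1) {u1 : V1} {u2 : V2} {u3 : V3}
    (e1 : E1 u1 v1) (e2 : E2 u2 v2) (e3 : E3 u3 v3) (hl12 : ℓ1 v1 = ℓ2 v2) (hl23 : ℓ2 v2 = ℓ3 v3) :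
    1 + Dval E1 ℓ1 E2 ℓ2 E3 ℓ3 u1 u2 u3 ≤ Dval E1 ℓ1 E2 ℓ2 E3 ℓ3 v1 v2 v3 := by
  rcases (Dval_eq_bot_or_exists hE1 : Dval E1 ℓ1 E2 ℓ2 E3 ℓ3 u1 u2 u3 = ⊥ ∨ _)
    with hbot | ⟨z, hz, hzmax⟩
  · simp [hbot]
  calc 1 + Dval E1 ℓ1 E2 ℓ2 E3 ℓ3 u1 u2 u3 = ((z ++ [ℓ1 v1]).length : WithBot ℕ) := by
        simp [hzmax, add_comm]
    _ ≤ _ := le_Dval hE1 (concat_mem_SIC e1 e2 e3 hl12 hl23 hz)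

end SIC

theorem stmt10 {V1 V2 V3 α : Type*} [Fintype V1]
    (E1 : V1 → V1 → Prop) (ℓ1 : V1 → α) (E2 : V2 → V2 → Prop) (ℓ2 : V2 → α)
    (E3 : V3 → V3 → Prop) (ℓ3 : V3 → α)
    (h1 : Acyclic E1)
    (v1 : V1) (v2 : V2) (v3 : V3)
    (hl12 : ℓ1 v1 = ℓ2 v2) (hl23 : ℓ2 v2 = ℓ3 v3)
    (hv3 : ∃ u, E3 u v3) :
    Dval E1 ℓ1 E2 ℓ2 E3 ℓ3 v1 v2 v3 =
      1 + sSup {d : WithBot ℕ | ∃ u1 u2 u3, E1 u1 v1 ∧ E2 u2 v2 ∧ E3 u3 v3 ∧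
        d = Dval E1 ℓ1 E2 ℓ2 E3 ℓ3 u1 u2 u3} := by
  set S := {d : WithBot ℕ | ∃ u1 u2 u3, E1 u1 v1 ∧ E2 u2 v2 ∧ E3 u3 v3 ∧
    d = Dval E1 ℓ1 E2 ℓ2 E3 ℓ3 u1 u2 u3}
  have hS : BddAbove S := ⟨Fintype.card V1, by
    rintro _ ⟨_, _, _, -, -, -, rfl⟩
    exact Dval_le_card h1⟩
  apply le_antisymm
  · refine maxLen_le fun z hz => ?_
    obtain ⟨u1, u2, u3, e1, e2, e3, hdrop, hlen⟩ := exists_dropLast_mem_SIC hv3 hz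
    calc (z.length : WithBot ℕ) = 1 + (z.dropLast.length : WithBot ℕ) := by
          rw [hlen, add_comm, Nat.cast_add, Nat.cast_one]
      _ ≤ 1 + sSup S := by
          gcongr
          exact (le_Dval h1 hdrop).trans (le_csSup hS ⟨u1, u2, u3, e1, e2, e3, rfl⟩)
  · rcases hS.csSup_eq_bot_or_mem with hbot | ⟨u1, u2, u3, e1, e2, e3, hmax⟩
    · simp [hbot]
    · rw [hmax]
      exact one_add_Dval_le h1 e1 e2 e3 hl12 hl23
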